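/- As p ↓ 0, the standard normal quantile satisfies Φ^{-1}(p) = −√(ln(1/p²) − ln ln(1/p²) − ln(2π)) + o(1). -/

import Mathlib

/-! Put `u = -Φ⁻¹(p)`, so that `u → ∞` and `p = Φ(-u)`. Since `-exp (-t²/2) / t` is an
antiderivative of `(1 + t⁻²) exp (-t²/2)`, the Gaussian tail satisfies the Mills-ratio bounds
`u / (u² + 1) φ(u) ≤ Φ(-u) ≤ φ(u) / u`, whence `A := log (1/p²) = u² + 2 log u + log (2π) + o(1)`.
Then `log A = 2 log u + o(1)`, so `A - log A - log (2π) = u² + o(1)`, and `|√L - u| ≤ |L - u²| / u`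
turns this into `√(A - log A - log (2π)) = u + o(1)`. -/

open Real MeasureTheory Filter

noncomputable def stdNormalCDF (x : ℝ) : ℝ :=
  ∫ t in Set.Iic x, (Real.sqrt (2 * Real.pi))⁻¹ * Real.exp (-t ^ 2 / 2)

noncomputable def stdNormalQuantile : ℝ → ℝ :=
  Function.invFun stdNormalCDF

open Set ProbabilityTheory Topology

lemma integrable_exp_neg_sq_div_two : Integrable fun t : ℝ => exp (-t ^ 2 / 2) := by
  simpa [neg_div, div_eq_inv_mul] using integrable_exp_neg_mul_sq (b := 1 / 2) (by norm_num)

lemma tendsto_exp_neg_sq_div_two_atTop : Tendsto (fun t : ℝ => exp (-t ^ 2 / 2)) atTop (𝓝 0) :=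
  tendsto_exp_atBot.comp <|
    (tendsto_neg_atTop_atBot.comp (tendsto_pow_atTop two_ne_zero)).atBot_div_const two_pos

lemma hasDerivAt_neg_exp_neg_sq_div_two_div {x : ℝ} (hx : x ≠ 0) :
    HasDerivAt (fun t => -(exp (-t ^ 2 / 2) / t)) ((1 + (x ^ 2)⁻¹) * exp (-x ^ 2 / 2)) x := by
  have hexp : HasDerivAt (fun t : ℝ => exp (-t ^ 2 / 2)) (-x * exp (-x ^ 2 / 2)) x := by
    have h : HasDerivAt (fun t : ℝ => -t ^ 2 / 2) (-x) x :=
      ((hasDerivAt_pow 2 x).neg.div_const 2).congr_deriv (by ring)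
    simpa [mul_comm] using h.exp
  refine ((hexp.div (hasDerivAt_id' x) hx).neg).congr_deriv ?_
  field_simp
  ring

lemma integral_Ioi_one_add_inv_sq_mul_exp {a : ℝ} (ha : 0 < a) :
    IntegrableOn (fun t => (1 + (t ^ 2)⁻¹) * exp (-t ^ 2 / 2)) (Ioi a) ∧
      ∫ t in Ioi a, (1 + (t ^ 2)⁻¹) * exp (-t ^ 2 / 2) = exp (-a ^ 2 / 2) / a := by
  have hderiv : ∀ x ∈ Ici a, HasDerivAt (fun t => -(exp (-t ^ 2 / 2) / t))
      ((1 + (x ^ 2)⁻¹) * exp (-x ^ 2 / 2)) x :=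
    fun x hx => hasDerivAt_neg_exp_neg_sq_div_two_div (ha.trans_le hx).ne'
  have hnonneg : ∀ x ∈ Ioi a, 0 ≤ (1 + (x ^ 2)⁻¹) * exp (-x ^ 2 / 2) :=
    fun x _ => by positivity
  have hlim : Tendsto (fun t => -(exp (-t ^ 2 / 2) / t)) atTop (𝓝 0) := by
    simpa [div_eq_mul_inv] using (tendsto_exp_neg_sq_div_two_atTop.mul tendsto_inv_atTop_zero).neg
  refine ⟨integrableOn_Ioi_deriv_of_nonneg' hderiv hnonneg hlim, ?_⟩
  rw [integral_Ioi_of_hasDerivAt_of_nonneg' hderiv hnonneg hlim]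
  ring

lemma integral_Ioi_exp_neg_sq_div_two_le {a : ℝ} (ha : 0 < a) :
    ∫ t in Ioi a, exp (-t ^ 2 / 2) ≤ exp (-a ^ 2 / 2) / a := by
  obtain ⟨hint, heq⟩ := integral_Ioi_one_add_inv_sq_mul_exp ha
  rw [← heq]
  refine setIntegral_mono_on integrable_exp_neg_sq_div_two.integrableOn hint measurableSet_Ioi
    fun t _ => ?_
  nlinarith [exp_pos (-t ^ 2 / 2), inv_nonneg.2 (sq_nonneg t)]

lemma div_sq_add_one_mul_exp_le_integral_Ioi {a : ℝ} (ha : 0 < a) :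
    a / (a ^ 2 + 1) * exp (-a ^ 2 / 2) ≤ ∫ t in Ioi a, exp (-t ^ 2 / 2) := by
  obtain ⟨hint, heq⟩ := integral_Ioi_one_add_inv_sq_mul_exp ha
  have hle : exp (-a ^ 2 / 2) / a ≤ (∫ t in Ioi a, exp (-t ^ 2 / 2)) * (1 + (a ^ 2)⁻¹) := by
    rw [← heq, ← integral_mul_const]
    refine setIntegral_mono_on hint (integrable_exp_neg_sq_div_two.integrableOn.mul_const _)
      measurableSet_Ioi fun t ht => ?_
    have : (t ^ 2)⁻¹ ≤ (a ^ 2)⁻¹ := by gcongr; exact ht.le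
    nlinarith [exp_pos (-t ^ 2 / 2)]
  calc a / (a ^ 2 + 1) * exp (-a ^ 2 / 2) = exp (-a ^ 2 / 2) / a / (1 + (a ^ 2)⁻¹) := by
        field_simp
    _ ≤ ∫ t in Ioi a, exp (-t ^ 2 / 2) := div_le_of_le_mul₀ (by positivity) (by positivity) hle

lemma stdNormalCDF_eq_cdf_gaussianReal : stdNormalCDF = cdf (gaussianReal 0 1) := by
  ext x
  rw [cdf_eq_real, measureReal_def, gaussianReal_apply_eq_integral _ one_ne_zero,
    ENNReal.toReal_ofReal (integral_nonneg fun t => gaussianPDFReal_nonneg _ _ t)]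
  simp [stdNormalCDF, gaussianPDFReal]

lemma stdNormalCDF_neg (a : ℝ) :
    stdNormalCDF (-a) = (√(2 * π))⁻¹ * ∫ t in Ioi a, exp (-t ^ 2 / 2) := by
  have h := integral_comp_neg_Iic (-a) fun t => (√(2 * π))⁻¹ * exp (-t ^ 2 / 2)
  simp only [neg_neg, even_two, Even.neg_pow] at h
  rw [stdNormalCDF, h, integral_const_mul]

lemma monotone_stdNormalCDF : Monotone stdNormalCDF := by
  rw [stdNormalCDF_eq_cdf_gaussianReal]
  exact monotone_cdf _

lemma tendsto_stdNormalCDF_atBot : Tendsto stdNormalCDF atBot (𝓝 0) := by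
  rw [stdNormalCDF_eq_cdf_gaussianReal]
  exact tendsto_cdf_atBot _

lemma tendsto_stdNormalCDF_atTop : Tendsto stdNormalCDF atTop (𝓝 1) := by
  rw [stdNormalCDF_eq_cdf_gaussianReal]
  exact tendsto_cdf_atTop _

lemma stdNormalCDF_pos (x : ℝ) : 0 < stdNormalCDF x := by
  rw [stdNormalCDF_eq_cdf_gaussianReal, cdf_eq_real, measureReal_def]
  refine ENNReal.toReal_pos (fun h => ?_) (measure_ne_top _ _)
  have := gaussianReal_absolutelyContinuous' 0 one_ne_zero h
  simp at this

lemma continuous_stdNormalCDF : Continuous stdNormalCDF :=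
  continuous_iff_continuousAt.2 fun x =>
    ((integrable_exp_neg_sq_div_two.const_mul _).integrableOn.continuousOn_Iic_primitive_Iic
      (a₀ := x + 1)).continuousAt (Iic_mem_nhds (lt_add_one x))

lemma stdNormalCDF_stdNormalQuantile {p : ℝ} (hp : p ∈ Ioo 0 1) :
    stdNormalCDF (stdNormalQuantile p) = p := by
  obtain ⟨a, ha⟩ := (tendsto_stdNormalCDF_atBot.eventually_le_const hp.1).exists
  obtain ⟨b, hb⟩ := (tendsto_stdNormalCDF_atTop.eventually_const_le hp.2).exists
  exact Function.invFun_eq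
    (mem_range_of_exists_le_of_exists_ge continuous_stdNormalCDF ⟨a, ha⟩ ⟨b, hb⟩)

lemma tendsto_stdNormalQuantile_nhdsGT_zero : Tendsto stdNormalQuantile (𝓝[>] 0) atBot := by
  refine tendsto_atBot.2 fun M => ?_
  filter_upwards [Ioo_mem_nhdsGT (zero_lt_one' ℝ), nhdsWithin_le_nhds (eventually_lt_nhds
    (stdNormalCDF_pos M))] with p hp hpM
  by_contra! h
  have := monotone_stdNormalCDF h.le
  rw [stdNormalCDF_stdNormalQuantile hp] at this
  linarith

lemma abs_sqrt_sub_le_abs_sub_sq_div {u : ℝ} (hu : 0 < u) (L : ℝ) :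
    |√L - u| ≤ |L - u ^ 2| / u := by
  rw [le_div_iff₀ hu]
  rcases le_or_gt 0 L with hL | hL
  · calc |√L - u| * u ≤ |√L - u| * (√L + u) := by gcongr; linarith [sqrt_nonneg L]
      _ = |L - u ^ 2| := by
        rw [← abs_of_nonneg (by positivity : 0 ≤ √L + u), ← abs_mul]
        congr 1
        linear_combination sq_sqrt hL
  · rw [sqrt_eq_zero_of_nonpos hL.le, zero_sub, abs_neg, abs_of_pos hu, abs_of_neg (by nlinarith)]
    nlinarith

lemma tendsto_sqrt_sub_of_tendsto_sub_sq {L : ℝ → ℝ}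
    (h : Tendsto (fun u => L u - u ^ 2) atTop (𝓝 0)) :
    Tendsto (fun u => √(L u) - u) atTop (𝓝 0) := by
  refine squeeze_zero_norm' ?_ (by simpa using h.abs)
  filter_upwards [eventually_ge_atTop 1] with u hu
  exact (abs_sqrt_sub_le_abs_sub_sq_div (by linarith) _).trans (div_le_self (abs_nonneg _) hu)

lemma tendsto_log_div_sq_atTop : Tendsto (fun u => log u / u ^ 2) atTop (𝓝 0) := by
  have h := isLittleO_log_id_atTop.tendsto_div_nhds_zero.mul tendsto_inv_atTop_zero
  rw [zero_mul] at h
  refine h.congr fun u => ?_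
  simp only [id]
  ring

lemma tendsto_sqrt_sub_log_sub_of_tendsto {A : ℝ → ℝ} {c : ℝ}
    (h : Tendsto (fun u => A u - (u ^ 2 + 2 * log u + c)) atTop (𝓝 0)) :
    Tendsto (fun u => √(A u - log (A u) - c) - u) atTop (𝓝 0) := by
  have hinv : Tendsto (fun u : ℝ => (u ^ 2)⁻¹) atTop (𝓝 0) :=
    tendsto_inv_atTop_zero.comp (tendsto_pow_atTop two_ne_zero)
  have hratio : Tendsto (fun u => A u / u ^ 2) atTop (𝓝 1) := by
    have h1 := ((tendsto_const_nhds (x := (1 : ℝ))).add ((h.mul hinv).add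
      ((tendsto_log_div_sq_atTop.const_mul 2).add (hinv.const_mul c))))
    simp only [mul_zero, add_zero] at h1
    refine h1.congr' ?_
    filter_upwards [eventually_gt_atTop 0] with u hu
    field_simp
    ring
  have hlog : Tendsto (fun u => log (A u) - 2 * log u) atTop (𝓝 0) := by
    have h1 := (continuousAt_log one_ne_zero).tendsto.comp hratio
    rw [log_one] at h1
    refine h1.congr' ?_
    filter_upwards [eventually_gt_atTop 0, hratio.eventually_const_lt one_pos] with u hu hA
    have hA0 : A u ≠ 0 := fun h0 => by simp [h0] at hA
    rw [Function.comp_apply, log_div hA0 (by positivity), log_pow, Nat.cast_ofNat]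
  refine tendsto_sqrt_sub_of_tendsto_sub_sq ?_
  simpa using (h.sub hlog).congr fun u => by ring

lemma tendsto_mul_exp_mul_integral_Ioi :
    Tendsto (fun u => u * exp (u ^ 2 / 2) * ∫ t in Ioi u, exp (-t ^ 2 / 2)) atTop (𝓝 1) := by
  have hlow : Tendsto (fun u : ℝ => 1 - (u ^ 2 + 1)⁻¹) atTop (𝓝 1) := by
    simpa using tendsto_const_nhds.sub (tendsto_inv_atTop_zero.comp
      (tendsto_atTop_add_const_right _ 1 (tendsto_pow_atTop (α := ℝ) two_ne_zero)))
  refine tendsto_of_tendsto_of_tendsto_of_le_of_le' hlow tendsto_const_nhds ?_ ?_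
  all_goals filter_upwards [eventually_gt_atTop 0] with u hu
  all_goals have hexp : exp (-u ^ 2 / 2) = (exp (u ^ 2 / 2))⁻¹ := by rw [← exp_neg, neg_div]
  · calc 1 - (u ^ 2 + 1)⁻¹ = u * exp (u ^ 2 / 2) * (u / (u ^ 2 + 1) * exp (-u ^ 2 / 2)) := by
          rw [hexp]
          field_simp
          ring
      _ ≤ _ := by gcongr; exact div_sq_add_one_mul_exp_le_integral_Ioi hu
  · calc _ ≤ u * exp (u ^ 2 / 2) * (exp (-u ^ 2 / 2) / u) := by
          gcongr; exact integral_Ioi_exp_neg_sq_div_two_le hu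
      _ = 1 := by rw [hexp]; field_simp

lemma tendsto_log_inv_sq_stdNormalCDF_neg_sub :
    Tendsto (fun u => log (1 / stdNormalCDF (-u) ^ 2) - (u ^ 2 + 2 * log u + log (2 * π)))
      atTop (𝓝 0) := by
  have h := ((continuousAt_log one_ne_zero).tendsto.comp tendsto_mul_exp_mul_integral_Ioi).const_mul
    (-2)
  rw [log_one, mul_zero] at h
  refine h.congr' ?_
  filter_upwards [eventually_gt_atTop 0] with u hu
  have hI : 0 < ∫ t in Ioi u, exp (-t ^ 2 / 2) :=
    (by positivity : 0 < u / (u ^ 2 + 1) * exp (-u ^ 2 / 2)).trans_le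
      (div_sq_add_one_mul_exp_le_integral_Ioi hu)
  rw [Function.comp_apply, stdNormalCDF_neg, log_mul (by positivity) (by positivity),
    log_mul (by positivity) (by positivity), log_exp, one_div, log_inv, log_pow,
    log_mul (by positivity) (by positivity), log_inv, log_sqrt (by positivity)]
  push_cast
  ring

theorem stmt_15 :
    Tendsto (fun p : ℝ =>
        stdNormalQuantile p +
          Real.sqrt (Real.log (1 / p ^ 2) - Real.log (Real.log (1 / p ^ 2))
            - Real.log (2 * Real.pi)))
      (nhdsWithin 0 (Set.Ioi 0)) (nhds 0) := by
  have hu : Tendsto (fun p => -stdNormalQuantile p) (𝓝[>] 0) atTop :=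
    tendsto_neg_atBot_atTop.comp tendsto_stdNormalQuantile_nhdsGT_zero
  refine ((tendsto_sqrt_sub_log_sub_of_tendsto
    tendsto_log_inv_sq_stdNormalCDF_neg_sub).comp hu).congr' ?_
  filter_upwards [Ioo_mem_nhdsGT (zero_lt_one' ℝ)] with p hp
  simp only [Function.comp_apply, neg_neg, stdNormalCDF_stdNormalQuantile hp]
  ring
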